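/- Let k be a positive integer and let (a_j)_{j≥1} be the unique sequence of rationals with exp(−Σ_{j≥1} a_j x^{j+1} d/dx) · x = ((1+x)^k − 1)/k in ℚ[[x]]. Then a_1 = (1−k)/2 and a_2 = (k²−1)/12. -/

import Mathlib

noncomputable section

open PowerSeries

/-- Formal derivative `d/dx` on `ℚ[[x]]`, coefficientwise. -/
def pderiv (f : PowerSeries ℚ) : PowerSeries ℚ :=
  PowerSeries.mk fun n => (n + 1 : ℚ) * PowerSeries.coeff (R := ℚ) (n + 1) f

/-- The power series `Σ_{j≥1} a_j x^{j+1}`, where `a i` encodes the coefficient `a_{i+1}`. -/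
def coefSeries (a : ℕ → ℚ) : PowerSeries ℚ :=
  PowerSeries.mk fun n => if 2 ≤ n then a (n - 2) else 0

/-- The derivation `D = Σ_{j≥1} a_j x^{j+1} d/dx` acting on `ℚ[[x]]`. -/
def Dop (a : ℕ → ℚ) (f : PowerSeries ℚ) : PowerSeries ℚ :=
  coefSeries a * pderiv f

/-- `exp(−Σ_{j≥1} a_j x^{j+1} d/dx) · x = Σ_{m≥0} (−D)^m(x)/m!`.
Since each `x^{j+1} d/dx` strictly increases the order of a series with zero constant
term, `D^m(x)` has order `≥ m + 1`, so the coefficient of `x^n` only receives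
contributions from `m ≤ n`; the truncated sum below is therefore the honest
`(x)`-adically convergent sum. -/
def expNegD (a : ℕ → ℚ) : PowerSeries ℚ :=
  PowerSeries.mk fun n =>
    ∑ m ∈ Finset.range (n + 1),
      ((-1 : ℚ) ^ m / m.factorial) * PowerSeries.coeff (R := ℚ) n ((Dop a)^[m] PowerSeries.X)

/-!
Only the coefficients of `x²` and `x³` matter. Writing `D` for the derivation, `D f` has
zero coefficients below `x²`, and its coefficients at `x², x³` depend only on those of `f`
at `x, x²`; so `exp(-D)·x` has coefficients `-a₁` and `-a₂ + a₁²` there. On the right these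
are `C(k,2)/k = (k-1)/2` and `C(k,3)/k = (k-1)(k-2)/6`, which determines `a₁` and then `a₂`.
-/

section

variable (a : ℕ → ℚ) (f : PowerSeries ℚ)

lemma coeff_Dop (n : ℕ) :
    coeff n (Dop a f) = ∑ p ∈ Finset.range (n + 1),
      (if 2 ≤ p then a (p - 2) else 0) * ((n - p + 1 : ℕ) * coeff (n - p + 1) f) := by
  simp only [Dop, pderiv, coefSeries, coeff_mul, Finset.Nat.sum_antidiagonal_eq_sum_range_succ_mk,
    coeff_mk]
  push_cast
  rfl

lemma coeff_Dop_of_le_one {n : ℕ} (hn : n ≤ 1) : coeff n (Dop a f) = 0 := by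
  interval_cases n <;> simp [coeff_Dop, Finset.sum_range_succ]

lemma coeff_two_Dop : coeff 2 (Dop a f) = a 0 * coeff 1 f := by
  simp [coeff_Dop, Finset.sum_range_succ]

lemma coeff_three_Dop : coeff 3 (Dop a f) = a 1 * coeff 1 f + 2 * a 0 * coeff 2 f := by
  simp [coeff_Dop, Finset.sum_range_succ, one_add_one_eq_two, add_comm, mul_left_comm (a 0),
    mul_assoc]

lemma coeff_two_expNegD : coeff 2 (expNegD a) = -a 0 := by
  simp [expNegD, Finset.sum_range_succ, coeff_two_Dop, coeff_Dop_of_le_one, coeff_X]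

lemma coeff_three_expNegD : coeff 3 (expNegD a) = -a 1 + a 0 ^ 2 := by
  simp [expNegD, Finset.sum_range_succ, coeff_two_Dop, coeff_three_Dop, coeff_Dop_of_le_one,
    coeff_X, sq, mul_assoc]

end

lemma coeff_C_mul_one_add_X_pow_sub_one {R : Type*} [CommRing R] (c : R) (k : ℕ) {n : ℕ}
    (hn : n ≠ 0) : coeff n (C c * ((1 + X) ^ k - 1)) = c * k.choose n := by
  have h : (1 + X : PowerSeries R) ^ k = ((1 + Polynomial.X) ^ k : Polynomial R) := by simp
  rw [coeff_C_mul, map_sub, h, Polynomial.coeff_coe, Polynomial.coeff_one_add_X_pow, coeff_one,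
    if_neg hn, sub_zero]

lemma Nat.cast_choose_three {K : Type*} [Field K] [CharZero K] (k : ℕ) :
    (k.choose 3 : K) = k * (k - 1) * (k - 2) / 6 := by
  induction k with
  | zero => simp
  | succ n ih =>
    rw [Nat.choose_succ_succ]
    push_cast [ih, Nat.cast_choose_two]
    ring

/-- if `(a_j)_{j≥1}` (encoded as `a : ℕ → ℚ` with `a i = a_{i+1}`) satisfies
`exp(−Σ_{j≥1} a_j x^{j+1} d/dx) · x = ((1+x)^k − 1)/k` in `ℚ[[x]]`, then
`a_1 = (1−k)/2` and `a_2 = (k²−1)/12`. -/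
theorem stmt3 (k : ℕ) (hk : 0 < k) (a : ℕ → ℚ)
    (ha : expNegD a = PowerSeries.C (R := ℚ) (1 / k) * ((1 + PowerSeries.X) ^ k - 1)) :
    a 0 = (1 - (k : ℚ)) / 2 ∧ a 1 = ((k : ℚ) ^ 2 - 1) / 12 := by
  have hk' : (k : ℚ) ≠ 0 := by positivity
  have h2 := congrArg (coeff 2) ha
  have h3 := congrArg (coeff 3) ha
  rw [coeff_two_expNegD, coeff_C_mul_one_add_X_pow_sub_one _ _ two_ne_zero,
    Nat.cast_choose_two] at h2
  rw [coeff_three_expNegD, coeff_C_mul_one_add_X_pow_sub_one _ _ three_ne_zero,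
    Nat.cast_choose_three] at h3
  field_simp at h2 h3
  have ha0 : a 0 = (1 - (k : ℚ)) / 2 := by linarith
  refine ⟨ha0, ?_⟩
  rw [ha0] at h3
  linarith
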